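/- For every integer n ≥ 2, one has (8/(ζ(n)·λ(n)))^{1/(2n−1)} ≤ 2.36e/(n − 1/2). -/
import Mathlib


/-- `ζ(k) = (((k−1)/2)!)²` for odd `k`, and `ζ(k) = (k/2)!((k−2)/2)!` for even `k`. -/
noncomputable def zeta (k : ℕ) : ℝ :=
  if k % 2 = 1 then ((((k - 1) / 2).factorial : ℝ)) ^ 2
  else ((k / 2).factorial : ℝ) * (((k - 2) / 2).factorial : ℝ)

/-- `ξ(1) = 1/2`, `ξ(k) = ((k−1)/2)!((k−3)/2)!/4` for odd `k ≥ 3`, and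
`ξ(k) = (((k−2)/2)!)²/4` for even `k`. -/
noncomputable def xi (k : ℕ) : ℝ :=
  if k = 1 then 1 / 2
  else if k % 2 = 1 then (((k - 1) / 2).factorial : ℝ) * (((k - 3) / 2).factorial : ℝ) / 4
  else ((((k - 2) / 2).factorial : ℝ)) ^ 2 / 4

/-- `λ(2) = 1` and `λ(k) = ξ(k−2)` for `k ≥ 3`. -/
noncomputable def lam (k : ℕ) : ℝ :=
  if k = 2 then 1 else xi (k - 2)

/- ### Auxiliary lemmas -/

lemma step_pow (x : ℝ) (hx : 0 < x) (N : ℕ) (hN : (N : ℝ) = 2 * x) :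
    (x + 2) ^ N ≤ x ^ N * Real.exp 4 := by
  have hxe : x + 2 ≤ x * Real.exp (2 / x) := by
    have h1 : 1 + 2 / x ≤ Real.exp (2 / x) := by linarith [Real.add_one_le_exp (2 / x)]
    have : x * (1 + 2 / x) ≤ x * Real.exp (2 / x) :=
      mul_le_mul_of_nonneg_left h1 hx.le
    calc x + 2 = x * (1 + 2 / x) := by field_simp
    _ ≤ x * Real.exp (2 / x) := this
  calc (x + 2) ^ N ≤ (x * Real.exp (2 / x)) ^ N := by
        apply pow_le_pow_left₀ (by positivity) hxe
  _ = x ^ N * Real.exp (2 / x) ^ N := mul_pow _ _ _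
  _ = x ^ N * Real.exp ((N : ℝ) * (2 / x)) := by rw [← Real.exp_nat_mul]
  _ = x ^ N * Real.exp 4 := by
        congr 1
        rw [hN]
        field_simp
        ring

lemma exp_pow4 : Real.exp 1 ^ 4 = Real.exp 4 := by
  rw [← Real.exp_nat_mul]; norm_num

lemma hK64 : (6.4 : ℝ) ≤ 2.36 * Real.exp 1 := by
  nlinarith [Real.exp_one_gt_d9]

lemma key_step (x C P : ℝ) (N : ℕ) (hx : 0 < x) (hC : 0 ≤ C) (hN : (N : ℝ) = 2 * x)
    (hpoly : (x + 2) ^ 4 ≤ (2.36 : ℝ) ^ 4 * P)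
    (ih : 32 * x ^ N ≤ (2.36 * Real.exp 1) ^ N * C) :
    32 * (x + 2) ^ (N + 4) ≤ (2.36 * Real.exp 1) ^ (N + 4) * (P * C) := by
  have hstep := step_pow x hx N hN
  have he4 : (0 : ℝ) < Real.exp 4 := Real.exp_pos 4
  have hx2 : (0 : ℝ) ≤ (x + 2) ^ 4 := by positivity
  have hK4 : (2.36 * Real.exp 1) ^ 4 = (2.36 : ℝ) ^ 4 * Real.exp 4 := by
    rw [mul_pow, exp_pow4]
  have hKN : (0 : ℝ) ≤ (2.36 * Real.exp 1) ^ N := by positivity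
  calc 32 * (x + 2) ^ (N + 4)
      = (x + 2) ^ 4 * (32 * (x + 2) ^ N) := by ring
    _ ≤ (x + 2) ^ 4 * (32 * (x ^ N * Real.exp 4)) := by
        apply mul_le_mul_of_nonneg_left _ hx2
        apply mul_le_mul_of_nonneg_left hstep (by norm_num)
    _ = ((x + 2) ^ 4 * Real.exp 4) * (32 * x ^ N) := by ring
    _ ≤ ((x + 2) ^ 4 * Real.exp 4) * ((2.36 * Real.exp 1) ^ N * C) := by
        apply mul_le_mul_of_nonneg_left ih (by positivity)
    _ ≤ ((2.36 : ℝ) ^ 4 * P * Real.exp 4) * ((2.36 * Real.exp 1) ^ N * C) := by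
        apply mul_le_mul_of_nonneg_right _ (mul_nonneg hKN hC)
        apply mul_le_mul_of_nonneg_right hpoly he4.le
    _ = (2.36 * Real.exp 1) ^ (N + 4) * (P * C) := by
        rw [pow_add, hK4]; ring

lemma numStep (y : ℝ) (N : ℕ) (C : ℝ) (hC : 0 ≤ C)
    (h : 32 * y ^ N ≤ (6.4 : ℝ) ^ N * C) :
    32 * y ^ N ≤ (2.36 * Real.exp 1) ^ N * C :=
  h.trans (mul_le_mul_of_nonneg_right (pow_le_pow_left₀ (by norm_num) hK64 N) hC)

/-- Even case key estimate, corresponding to `n = 2(k+2)`. -/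
lemma evenCase (k : ℕ) :
    32 * (2 * (k : ℝ) + 7/2) ^ (4 * k + 7)
      ≤ (2.36 * Real.exp 1) ^ (4 * k + 7)
        * (((k+2).factorial : ℝ) * ((k+1).factorial : ℝ) * ((k.factorial : ℝ)) ^ 2) := by
  rcases le_or_gt k 4 with hk | hk
  · interval_cases k <;>
      · apply numStep _ _ _ (by positivity)
        norm_num [Nat.factorial]
  · obtain ⟨j, rfl⟩ : ∃ j, k = 5 + j := ⟨k - 5, by omega⟩
    clear hk
    induction j with
    | zero =>
        apply numStep _ _ _ (by positivity)
        norm_num [Nat.factorial]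
    | succ j ih =>
        have hk5 : (5 : ℝ) ≤ ((5 + j : ℕ) : ℝ) := by
          push_cast; linarith [Nat.cast_nonneg (α := ℝ) j]
        have hpoly : ((2 * ((5 + j : ℕ) : ℝ) + 7/2) + 2) ^ 4
            ≤ (2.36 : ℝ) ^ 4 * ((((5 + j : ℕ) : ℝ) + 3) * (((5 + j : ℕ) : ℝ) + 2)
              * (((5 + j : ℕ) : ℝ) + 1) ^ 2) := by
          nlinarith [hk5, sq_nonneg (((5 + j : ℕ) : ℝ) - 5),
            mul_nonneg (sub_nonneg.2 hk5) (sub_nonneg.2 hk5),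
            mul_nonneg (mul_nonneg (sub_nonneg.2 hk5) (sub_nonneg.2 hk5)) (sub_nonneg.2 hk5),
            sq_nonneg ((((5 + j : ℕ) : ℝ) - 5) ^ 2)]
        have key := key_step (2 * ((5 + j : ℕ) : ℝ) + 7/2)
          (((5 + j + 2).factorial : ℝ) * ((5 + j + 1).factorial : ℝ) * (((5 + j).factorial : ℝ)) ^ 2)
          ((((5 + j : ℕ) : ℝ) + 3) * (((5 + j : ℕ) : ℝ) + 2) * (((5 + j : ℕ) : ℝ) + 1) ^ 2)
          (4 * (5 + j) + 7) (by positivity) (by positivity) (by push_cast; ring) hpoly ih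
        have hexp : 4 * (5 + (j + 1)) + 7 = (4 * (5 + j) + 7) + 4 := by omega
        have hb : (2 * ((5 + (j + 1) : ℕ) : ℝ) + 7/2) = (2 * ((5 + j : ℕ) : ℝ) + 7/2) + 2 := by
          push_cast; ring
        have hCC : ((5 + (j + 1) + 2).factorial : ℝ) * ((5 + (j + 1) + 1).factorial : ℝ)
              * (((5 + (j + 1)).factorial : ℝ)) ^ 2
            = ((((5 + j : ℕ) : ℝ) + 3) * (((5 + j : ℕ) : ℝ) + 2) * (((5 + j : ℕ) : ℝ) + 1) ^ 2)
              * (((5 + j + 2).factorial : ℝ) * ((5 + j + 1).factorial : ℝ)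
                * (((5 + j).factorial : ℝ)) ^ 2) := by
          rw [show 5 + (j + 1) + 2 = (5 + j + 2) + 1 by omega,
            show 5 + (j + 1) + 1 = (5 + j + 1) + 1 by omega,
            show 5 + (j + 1) = (5 + j) + 1 by omega]
          simp only [Nat.factorial_succ]
          push_cast
          ring
        rw [hexp, hb, hCC]
        exact key

/-- Odd case key estimate, corresponding to `n = 2(k+2)+1`. -/
lemma oddCase (k : ℕ) :
    32 * (2 * (k : ℝ) + 9/2) ^ (4 * k + 9)
      ≤ (2.36 * Real.exp 1) ^ (4 * k + 9)
        * (((k+2).factorial : ℝ) ^ 2 * ((k+1).factorial : ℝ) * (k.factorial : ℝ)) := by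
  rcases le_or_gt k 3 with hk | hk
  · interval_cases k <;>
      · apply numStep _ _ _ (by positivity)
        norm_num [Nat.factorial]
  · obtain ⟨j, rfl⟩ : ∃ j, k = 4 + j := ⟨k - 4, by omega⟩
    clear hk
    induction j with
    | zero =>
        apply numStep _ _ _ (by positivity)
        norm_num [Nat.factorial]
    | succ j ih =>
        have hk5 : (4 : ℝ) ≤ ((4 + j : ℕ) : ℝ) := by
          push_cast; linarith [Nat.cast_nonneg (α := ℝ) j]
        have hpoly : ((2 * ((4 + j : ℕ) : ℝ) + 9/2) + 2) ^ 4
            ≤ (2.36 : ℝ) ^ 4 * ((((4 + j : ℕ) : ℝ) + 3) ^ 2 * (((4 + j : ℕ) : ℝ) + 2)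
              * (((4 + j : ℕ) : ℝ) + 1)) := by
          nlinarith [hk5, sq_nonneg (((4 + j : ℕ) : ℝ) - 4),
            mul_nonneg (sub_nonneg.2 hk5) (sub_nonneg.2 hk5),
            mul_nonneg (mul_nonneg (sub_nonneg.2 hk5) (sub_nonneg.2 hk5)) (sub_nonneg.2 hk5),
            sq_nonneg ((((4 + j : ℕ) : ℝ) - 4) ^ 2)]
        have key := key_step (2 * ((4 + j : ℕ) : ℝ) + 9/2)
          (((4 + j + 2).factorial : ℝ) ^ 2 * ((4 + j + 1).factorial : ℝ) * ((4 + j).factorial : ℝ))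
          ((((4 + j : ℕ) : ℝ) + 3) ^ 2 * (((4 + j : ℕ) : ℝ) + 2) * (((4 + j : ℕ) : ℝ) + 1))
          (4 * (4 + j) + 9) (by positivity) (by positivity) (by push_cast; ring) hpoly ih
        have hexp : 4 * (4 + (j + 1)) + 9 = (4 * (4 + j) + 9) + 4 := by omega
        have hb : (2 * ((4 + (j + 1) : ℕ) : ℝ) + 9/2) = (2 * ((4 + j : ℕ) : ℝ) + 9/2) + 2 := by
          push_cast; ring
        have hCC : ((4 + (j + 1) + 2).factorial : ℝ) ^ 2 * ((4 + (j + 1) + 1).factorial : ℝ)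
              * ((4 + (j + 1)).factorial : ℝ)
            = ((((4 + j : ℕ) : ℝ) + 3) ^ 2 * (((4 + j : ℕ) : ℝ) + 2) * (((4 + j : ℕ) : ℝ) + 1))
              * (((4 + j + 2).factorial : ℝ) ^ 2 * ((4 + j + 1).factorial : ℝ)
                * ((4 + j).factorial : ℝ)) := by
          rw [show 4 + (j + 1) + 2 = (4 + j + 2) + 1 by omega,
            show 4 + (j + 1) + 1 = (4 + j + 1) + 1 by omega,
            show 4 + (j + 1) = (4 + j) + 1 by omega]
          simp only [Nat.factorial_succ]
          push_cast
          ring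
        rw [hexp, hb, hCC]
        exact key

lemma g_even (k : ℕ) : zeta (2 * (k + 2)) * lam (2 * (k + 2))
    = (((k+2).factorial : ℝ) * ((k+1).factorial : ℝ) * ((k.factorial : ℝ)) ^ 2) / 4 := by
  rw [zeta, lam, xi]
  rw [if_neg (by omega : ¬ 2 * (k + 2) % 2 = 1),
      if_neg (by omega : ¬ 2 * (k + 2) = 2),
      if_neg (by omega : ¬ 2 * (k + 2) - 2 = 1),
      if_neg (by omega : ¬ (2 * (k + 2) - 2) % 2 = 1)]
  rw [show 2 * (k + 2) / 2 = k + 2 by omega,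
      show (2 * (k + 2) - 2) / 2 = k + 1 by omega,
      show (2 * (k + 2) - 2 - 2) / 2 = k by omega]
  ring

lemma g_odd (k : ℕ) : zeta (2 * (k + 2) + 1) * lam (2 * (k + 2) + 1)
    = (((k+2).factorial : ℝ) ^ 2 * ((k+1).factorial : ℝ) * (k.factorial : ℝ)) / 4 := by
  rw [zeta, lam, xi]
  rw [if_pos (by omega : (2 * (k + 2) + 1) % 2 = 1),
      if_neg (by omega : ¬ 2 * (k + 2) + 1 = 2),
      if_neg (by omega : ¬ 2 * (k + 2) + 1 - 2 = 1),
      if_pos (by omega : (2 * (k + 2) + 1 - 2) % 2 = 1)]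
  rw [show (2 * (k + 2) + 1 - 1) / 2 = k + 2 by omega,
      show (2 * (k + 2) + 1 - 2 - 1) / 2 = k + 1 by omega,
      show (2 * (k + 2) + 1 - 2 - 3) / 2 = k by omega]
  ring

lemma g_two : zeta 2 * lam 2 = 1 := by
  rw [zeta, lam]; norm_num [Nat.factorial]

lemma g_three : zeta 3 * lam 3 = 1 / 2 := by
  rw [zeta, lam, xi]; norm_num [Nat.factorial]

/-- Final wrapper: from the polynomial-form estimate to the rpow statement. -/
lemma final2 (n N : ℕ) (C : ℝ) (hn : 2 ≤ n) (hN : N = 2 * n - 1)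
    (hgC : zeta n * lam n = C / 4)
    (h32 : 32 * ((n : ℝ) - 1/2) ^ N ≤ (2.36 * Real.exp 1) ^ N * C) :
    (8 / (zeta n * lam n)) ^ (1 / (2 * (n : ℝ) - 1))
      ≤ 2.36 * Real.exp 1 / ((n : ℝ) - 1 / 2) := by
  have hn2 : (2 : ℝ) ≤ (n : ℝ) := by exact_mod_cast hn
  have hd : 0 < (n : ℝ) - 1/2 := by linarith
  have hKp : (0 : ℝ) < 2.36 * Real.exp 1 := by positivity
  have hKN : (0 : ℝ) < (2.36 * Real.exp 1) ^ N := pow_pos hKp N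
  have hC : 0 < C := by
    by_contra hc
    push_neg at hc
    have h1 : (0 : ℝ) < 32 * ((n : ℝ) - 1/2) ^ N := by positivity
    nlinarith [mul_nonpos_of_nonneg_of_nonpos hKN.le hc]
  have hg : 0 < zeta n * lam n := by rw [hgC]; linarith
  have hT : 8 * ((n : ℝ) - 1/2) ^ N ≤ (2.36 * Real.exp 1) ^ N * (zeta n * lam n) := by
    rw [hgC]
    have heq : (2.36 * Real.exp 1) ^ N * (C / 4) = ((2.36 * Real.exp 1) ^ N * C) / 4 := by ring
    rw [heq]
    linarith
  have hNc : ((N : ℕ) : ℝ) = 2 * (n : ℝ) - 1 := by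
    subst hN
    rw [Nat.cast_sub (by omega)]
    push_cast
    ring
  have hden : (0 : ℝ) < 2 * (n : ℝ) - 1 := by linarith
  have key : 8 / (zeta n * lam n) ≤ ((2.36 * Real.exp 1) / ((n : ℝ) - 1/2)) ^ N := by
    rw [div_pow, div_le_div_iff₀ hg (pow_pos hd N)]
    exact hT
  have hBnn : (0 : ℝ) ≤ (2.36 * Real.exp 1) / ((n : ℝ) - 1/2) := by positivity
  calc (8 / (zeta n * lam n)) ^ (1 / (2 * (n : ℝ) - 1))
      ≤ (((2.36 * Real.exp 1) / ((n : ℝ) - 1/2)) ^ N) ^ (1 / (2 * (n : ℝ) - 1)) := by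
        apply Real.rpow_le_rpow (by positivity) key
        positivity
    _ = ((2.36 * Real.exp 1) / ((n : ℝ) - 1/2)) ^ ((N : ℝ) * (1 / (2 * (n : ℝ) - 1))) := by
        rw [← Real.rpow_natCast ((2.36 * Real.exp 1) / ((n : ℝ) - 1/2)) N,
          ← Real.rpow_mul hBnn]
    _ = 2.36 * Real.exp 1 / ((n : ℝ) - 1 / 2) := by
        rw [hNc, mul_one_div, div_self (by linarith : 2 * (n : ℝ) - 1 ≠ 0), Real.rpow_one]

/-- **Lemma A.2.**  For every integer `n ≥ 2`,
`(8/(ζ(n) λ(n)))^{1/(2n−1)} ≤ 2.36 e/(n − 1/2)`. -/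
theorem zeta_lam_bound (n : ℕ) (hn : 2 ≤ n) :
    (8 / (zeta n * lam n)) ^ (1 / (2 * (n : ℝ) - 1))
      ≤ 2.36 * Real.exp 1 / ((n : ℝ) - 1 / 2) := by
  rcases Nat.even_or_odd n with he | ho
  · obtain ⟨m, hm⟩ := he
    rcases Nat.lt_or_ge m 2 with h1 | h2
    · have h2' : n = 2 := by omega
      subst h2'
      apply final2 2 3 4 hn (by omega)
      · rw [g_two]; norm_num
      · apply numStep _ _ _ (by norm_num)
        norm_num
    · obtain ⟨k, hk⟩ : ∃ k, n = 2 * (k + 2) := ⟨m - 2, by omega⟩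
      subst hk
      apply final2 _ (4 * k + 7) _ hn (by omega) (g_even k)
      rw [show ((2 * (k + 2) : ℕ) : ℝ) - 1/2 = 2 * (k : ℝ) + 7/2 by push_cast; ring]
      exact evenCase k
  · obtain ⟨m, hm⟩ := ho
    rcases Nat.lt_or_ge m 2 with h1 | h2
    · have h3' : n = 3 := by omega
      subst h3'
      apply final2 3 5 2 hn (by omega)
      · rw [g_three]; norm_num
      · apply numStep _ _ _ (by norm_num)
        norm_num
    · obtain ⟨k, hk⟩ : ∃ k, n = 2 * (k + 2) + 1 := ⟨m - 2, by omega⟩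
      subst hk
      apply final2 _ (4 * k + 9) _ hn (by omega) (g_odd k)
      rw [show ((2 * (k + 2) + 1 : ℕ) : ℝ) - 1/2 = 2 * (k : ℝ) + 9/2 by push_cast; ring]
      exact oddCase k
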